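/- Let κ₀ ∈ ℝ and κ₁ > 0, let θ ∈ (1/2, 1), let h > 0, and let l ≥ τ(θ) h. Then h² l^{2θ−2} ≤ h^{2θ} τ(θ)^{2(θ−1)}, and consequently h² l^{2θ−2} ≤ h^{2θ} ϱ(κ₀,κ₁)². -/
import Mathlib


/-- `r(θ) = 1 − κ₁(θ − 1/2)(θ − 1)`. -/
noncomputable def rfun (κ₁ θ : ℝ) : ℝ := 1 - κ₁ * (θ - 1/2) * (θ - 1)

/-- `τ(θ) = exp(1 + κ₀ − r(θ)/(2(1 − θ)))`. -/
noncomputable def tau (κ₀ κ₁ θ : ℝ) : ℝ :=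
  Real.exp (1 + κ₀ - rfun κ₁ θ / (2 * (1 - θ)))

/-- The constant `ϱ(κ₀,κ₁)` from formula (5.3) of the paper. -/
noncomputable def varrho (κ₀ κ₁ : ℝ) : ℝ :=
  if (κ₀ + 1) / κ₁ > 1/4 then Real.exp (1/2)
  else if (κ₀ + 1) / κ₁ < -(1/4) then Real.exp (-κ₀ / 2)
  else Real.exp ((16 * κ₀ ^ 2 - 8 * κ₀ * (κ₁ - 4) + (4 + κ₁) ^ 2) / (32 * κ₁))

lemma tau_rpow_le (κ₀ κ₁ : ℝ) (hκ₁ : 0 < κ₁) (θ : ℝ)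
    (hθ1 : 1/2 < θ) (hθ2 : θ < 1) :
    tau κ₀ κ₁ θ ^ (2 * (θ - 1)) ≤ varrho κ₀ κ₁ ^ 2 := by
  have hne : (1 : ℝ) - θ ≠ 0 := by linarith
  set A : ℝ := 1 + κ₀ - rfun κ₁ θ / (2 * (1 - θ)) with hA
  have h1 : tau κ₀ κ₁ θ ^ (2 * (θ - 1)) = Real.exp (A * (2 * (θ - 1))) := by
    rw [tau, ← Real.exp_log (Real.exp_pos A), Real.log_exp,
      ← Real.exp_mul]
  have hAe : A * (2 * (θ - 1)) = 2 * (θ - 1) * (1 + κ₀) + rfun κ₁ θ := by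
    rw [hA]; field_simp; ring
  rw [h1, hAe, varrho]
  split_ifs with hc1 hc2
  · have hb : κ₁ / 4 < κ₀ + 1 := by
      rw [gt_iff_lt, lt_div_iff₀ hκ₁] at hc1; linarith
    rw [← Real.exp_nat_mul, Real.exp_le_exp, rfun]
    nlinarith [mul_pos (show (0:ℝ) < 1 - θ by linarith)
      (show (0:ℝ) < 2 * (1 + κ₀) - κ₁ * (θ - 1/2) by nlinarith)]
  · have hb : κ₀ + 1 < -(κ₁ / 4) := by
      rw [div_lt_iff₀ hκ₁] at hc2; linarith
    rw [← Real.exp_nat_mul, Real.exp_le_exp, rfun]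
    nlinarith [mul_pos (show (0:ℝ) < θ - 1/2 by linarith)
      (show (0:ℝ) < κ₁ * (θ - 1) - 2 * (1 + κ₀) by nlinarith)]
  · rw [← Real.exp_nat_mul, Real.exp_le_exp, rfun]
    rw [show ((2:ℕ):ℝ) * ((16 * κ₀ ^ 2 - 8 * κ₀ * (κ₁ - 4) + (4 + κ₁) ^ 2) / (32 * κ₁))
        = (16 * κ₀ ^ 2 - 8 * κ₀ * (κ₁ - 4) + (4 + κ₁) ^ 2) / (16 * κ₁) by
      push_cast; field_simp; ring]
    rw [le_div_iff₀ (by positivity : (0:ℝ) < 16 * κ₁)]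
    nlinarith [sq_nonneg (κ₁ / 2 - 2 * (1 + κ₀) - 2 * κ₁ * (1 - θ)), sq_nonneg (κ₁ - 4 * κ₀ - 4)]

/-- The anisotropy-robustness step (5.10) of the paper: if `l ≥ τ(θ)h` then
`h² l^{2θ−2} ≤ h^{2θ} τ(θ)^{2(θ−1)}`, and consequently
`h² l^{2θ−2} ≤ h^{2θ} ϱ(κ₀,κ₁)²`. -/
theorem anisotropy_robustness (κ₀ κ₁ : ℝ) (hκ₁ : 0 < κ₁)
    (θ : ℝ) (hθ : θ ∈ Set.Ioo (1/2 : ℝ) 1) (h l : ℝ) (hh : 0 < h)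
    (hl : tau κ₀ κ₁ θ * h ≤ l) :
    h ^ 2 * l ^ (2 * θ - 2) ≤ h ^ (2 * θ) * tau κ₀ κ₁ θ ^ (2 * (θ - 1)) ∧
      h ^ 2 * l ^ (2 * θ - 2) ≤ h ^ (2 * θ) * varrho κ₀ κ₁ ^ 2 := by
  obtain ⟨hθ1, hθ2⟩ := hθ
  have ht0 : 0 < tau κ₀ κ₁ θ := Real.exp_pos _
  have hth : 0 < tau κ₀ κ₁ θ * h := mul_pos ht0 hh
  have he : 2 * θ - 2 ≤ 0 := by linarith
  have h1 : l ^ (2 * θ - 2) ≤ (tau κ₀ κ₁ θ * h) ^ (2 * θ - 2) :=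
    Real.rpow_le_rpow_of_nonpos hth hl he
  have key : h ^ 2 * l ^ (2 * θ - 2) ≤ h ^ (2 * θ) * tau κ₀ κ₁ θ ^ (2 * (θ - 1)) := by
    calc h ^ 2 * l ^ (2 * θ - 2) ≤ h ^ 2 * (tau κ₀ κ₁ θ * h) ^ (2 * θ - 2) := by
          exact mul_le_mul_of_nonneg_left h1 (by positivity)
      _ = h ^ (2 * θ) * tau κ₀ κ₁ θ ^ (2 * (θ - 1)) := by
          rw [Real.mul_rpow ht0.le hh.le,
            show (h:ℝ) ^ 2 = h ^ ((2:ℕ):ℝ) from (Real.rpow_natCast h 2).symm]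
          push_cast
          rw [show (2 * (θ - 1)) = 2 * θ - 2 by ring, mul_comm (tau κ₀ κ₁ θ ^ (2 * θ - 2)),
            ← mul_assoc, ← Real.rpow_add hh]
          ring_nf
  refine ⟨key, key.trans ?_⟩
  exact mul_le_mul_of_nonneg_left (tau_rpow_le κ₀ κ₁ hκ₁ θ hθ1 hθ2)
    (Real.rpow_nonneg hh.le _)
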